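/- arXiv:2408.09047 — 6 statements merged into one kernel-verified Lean document; each statement's English description precedes it below -/
import Mathlib

section
/- Let B_m denote the closed unit ball in ℝ^m. Suppose o : Θ → ℝ^N and r : Θ × B_m → [0,∞) are both L₀-Lipschitz in z ∈ ℝ^m (uniformly in other variables), and r is continuous in ζ ∈ B_m. Then the set-valued map H(t,x,z) := { o(t,x,z) + ι·r(t,x,z,ζ)·ζ : ζ ∈ B_m, 0 ≤ ι ≤ 1 } is 2L₀-separable, i.e., there is a countable family of functions Θ → ℝ^N, each 2L₀-Lipschitz in z, whose pointwise closure equals H. -/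
/-!
Parametrise `H(t,x,z)` by the compact set `K = B̄(0,1) × [0,1]` of pairs `(ζ, ι)`. For a fixed
pair, `z ↦ o + ι r(·,ζ) ζ` is `2L₀`-Lipschitz because `|ι| ≤ 1` and `‖ζ‖ ≤ 1`. For fixed
`(t,x,z)` the map `(ζ, ι) ↦ o + ι r ζ ζ` is continuous on the compact set `K`, so its image
`H(t,x,z)` is closed and is the closure of the image of any dense sequence in `K`; the selectors
are indexed by one such sequence, chosen independently of `(t,x,z)`.
-/

open Set Metric

theorem LipschitzWith.mul_smul_of_abs_le_one {α E : Type*} [PseudoMetricSpace α]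
    [SeminormedAddCommGroup E] [NormedSpace ℝ E] {K : NNReal} {f : α → ℝ}
    (hf : LipschitzWith K f) {ι : ℝ} (hι : |ι| ≤ 1) {ζ : E} (hζ : ‖ζ‖ ≤ 1) :
    LipschitzWith K fun a => (ι * f a) • ζ := by
  refine LipschitzWith.of_dist_le_mul fun a b => ?_
  calc dist ((ι * f a) • ζ) ((ι * f b) • ζ) = |ι| * dist (f a) (f b) * ‖ζ‖ := by
        rw [dist_eq_norm, ← sub_smul, norm_smul, ← mul_sub, norm_mul, ← dist_eq_norm,
          Real.norm_eq_abs]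
    _ ≤ 1 * dist (f a) (f b) * 1 := by gcongr
    _ ≤ K * dist a b := by simpa using hf.dist_le_mul a b

theorem Continuous.range_eq_closure_range_comp {X Y ι : Type*} [TopologicalSpace X]
    [CompactSpace X] [TopologicalSpace Y] [T2Space Y] {g : X → Y} (hg : Continuous g)
    {u : ι → X} (hu : DenseRange u) : range g = closure (range (g ∘ u)) :=
  subset_antisymm (by simpa only [range_comp] using hg.range_subset_closure_image_dense hu)
    ((isCompact_range hg).isClosed.closure_subset_iff.mpr (range_comp_subset_range u g))

theorem stmt4_general {d m : ℕ} (L₀ : NNReal)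
    (o : ℝ → EuclideanSpace ℝ (Fin d) → EuclideanSpace ℝ (Fin m) →
      EuclideanSpace ℝ (Fin m))
    (r : ℝ → EuclideanSpace ℝ (Fin d) → EuclideanSpace ℝ (Fin m) →
      EuclideanSpace ℝ (Fin m) → ℝ)
    (ho_lip : ∀ t x, LipschitzWith L₀ (o t x))
    (hr_lip : ∀ t x ζ, ζ ∈ Metric.closedBall (0 : EuclideanSpace ℝ (Fin m)) 1 →
      LipschitzWith L₀ (fun z => r t x z ζ))
    (hr_cont : ∀ t x z, ContinuousOn (fun ζ => r t x z ζ)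
      (Metric.closedBall (0 : EuclideanSpace ℝ (Fin m)) 1)) :
    ∃ Hk : ℕ → ℝ → EuclideanSpace ℝ (Fin d) → EuclideanSpace ℝ (Fin m) →
        EuclideanSpace ℝ (Fin m),
      (∀ k t x, LipschitzWith (2 * L₀) (Hk k t x)) ∧
      ∀ t x z,
        {y : EuclideanSpace ℝ (Fin m) |
            ∃ ζ ∈ Metric.closedBall (0 : EuclideanSpace ℝ (Fin m)) 1,
              ∃ ι ∈ Set.Icc (0:ℝ) 1, y = o t x z + (ι * r t x z ζ) • ζ}
          = closure (Set.range fun k => Hk k t x z) := by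
  set K := closedBall (0 : EuclideanSpace ℝ (Fin m)) 1 ×ˢ Icc (0 : ℝ) 1
  have : CompactSpace K :=
    isCompact_iff_compactSpace.mp ((isCompact_closedBall _ _).prod isCompact_Icc)
  have : Nonempty K := ⟨⟨(0, 0), by simp [K]⟩⟩
  obtain ⟨u, hu⟩ := TopologicalSpace.exists_dense_seq K
  refine ⟨fun k t x z => o t x z + ((u k).1.2 * r t x z (u k).1.1) • (u k).1.1,
    fun k t x => ?_, fun t x z => ?_⟩
  · obtain ⟨hζ, hι₀, hι₁⟩ := (u k).2
    have hζ' : ‖(u k).1.1‖ ≤ 1 := by simpa using hζ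
    simpa only [two_mul] using (ho_lip t x).add
      ((hr_lip t x _ hζ).mul_smul_of_abs_le_one (abs_le.mpr ⟨by linarith, hι₁⟩) hζ')
  · have hg : Continuous fun p : K => o t x z + (p.1.2 * r t x z p.1.1) • p.1.1 :=
      continuous_const.add <|
        ((continuous_snd.comp continuous_subtype_val).mul <|
          (hr_cont t x z).comp_continuous (continuous_fst.comp continuous_subtype_val)
            fun p => p.2.1).smul (continuous_fst.comp continuous_subtype_val)
    refine Eq.trans ?_ (hg.range_eq_closure_range_comp hu)
    ext y
    constructor
    · rintro ⟨ζ, hζ, ι, hι, rfl⟩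
      exact ⟨⟨(ζ, ι), hζ, hι⟩, rfl⟩
    · rintro ⟨⟨⟨ζ, ι⟩, hζ, hι⟩, rfl⟩
      exact ⟨ζ, hζ, ι, hι, rfl⟩

/-- the set-valued map
`H(t,x,z) = { o(t,x,z) + ι r(t,x,z,ζ) ζ : ζ ∈ B̄(0,1), 0 ≤ ι ≤ 1 }`
(with `o`, `r(·,ζ)` `L₀`-Lipschitz in `z` and `r` continuous in `ζ`) is
`2L₀`-separable: there is a countable family of `2L₀`-Lipschitz-in-`z`
selectors whose pointwise closure equals `H`. -/
theorem stmt4 {d m : ℕ} (L₀ : NNReal)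
    (o : ℝ → EuclideanSpace ℝ (Fin d) → EuclideanSpace ℝ (Fin m) →
      EuclideanSpace ℝ (Fin m))
    (r : ℝ → EuclideanSpace ℝ (Fin d) → EuclideanSpace ℝ (Fin m) →
      EuclideanSpace ℝ (Fin m) → ℝ)
    (hr_nonneg : ∀ t x z ζ, 0 ≤ r t x z ζ)
    (ho_lip : ∀ t x, LipschitzWith L₀ (o t x))
    (hr_lip : ∀ t x ζ, ζ ∈ Metric.closedBall (0 : EuclideanSpace ℝ (Fin m)) 1 →
      LipschitzWith L₀ (fun z => r t x z ζ))
    (hr_cont : ∀ t x z, ContinuousOn (fun ζ => r t x z ζ)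
      (Metric.closedBall (0 : EuclideanSpace ℝ (Fin m)) 1)) :
    ∃ Hk : ℕ → ℝ → EuclideanSpace ℝ (Fin d) → EuclideanSpace ℝ (Fin m) →
        EuclideanSpace ℝ (Fin m),
      (∀ k t x, LipschitzWith (2 * L₀) (Hk k t x)) ∧
      ∀ t x z,
        {y : EuclideanSpace ℝ (Fin m) |
            ∃ ζ ∈ Metric.closedBall (0 : EuclideanSpace ℝ (Fin m)) 1,
              ∃ ι ∈ Set.Icc (0:ℝ) 1, y = o t x z + (ι * r t x z ζ) • ζ}
          = closure (Set.range fun k => Hk k t x z) :=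
  stmt4_general L₀ o r ho_lip hr_lip hr_cont
end

section
/- Let o : ℝ^m → ℝ^N and r : ℝ^m → [0,∞) be L₀-Lipschitz, and let η ∈ ℝ^N be fixed. Define H(z) := η if |η − o(z)| ≤ r(z), and H(z) := o(z) + (r(z)/|η − o(z)|)·(η − o(z)) otherwise (projection of η onto the closed ball centered at o(z) with radius r(z)). Then H is 4L₀-Lipschitz in z, and |η − H(z)| = d(η, B̄(o(z), r(z))) for every z. -/
open Metric RealInnerProductSpace

noncomputable def ballProj {N : ℕ} (ρ : ℝ) (v : EuclideanSpace ℝ (Fin N)) :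
    EuclideanSpace ℝ (Fin N) :=
  if ‖v‖ ≤ ρ then v else (ρ / ‖v‖) • v

lemma ballProj_radius {N : ℕ} {ρ ρ' : ℝ} (hρ : 0 ≤ ρ) (hρ' : 0 ≤ ρ')
    (v : EuclideanSpace ℝ (Fin N)) :
    ‖ballProj ρ v - ballProj ρ' v‖ ≤ |ρ - ρ'| := by
  unfold ballProj
  set a := ‖v‖ with ha
  by_cases h1 : a ≤ ρ <;> by_cases h2 : a ≤ ρ' <;>
    simp only [h1, h2, if_pos, if_neg, if_true, if_false]
  · simp [abs_nonneg]
  · push_neg at h2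
    have hva : v - (ρ' / a) • v = (1 - ρ' / a) • v := by
      rw [sub_smul, one_smul]
    have ha0 : 0 < a := lt_of_le_of_lt hρ' h2
    rw [hva, norm_smul, Real.norm_eq_abs,
      abs_of_nonneg (by rw [sub_nonneg]; exact (div_le_one ha0).2 h2.le), ← ha]
    have h3 : (1 - ρ' / a) * a = a - ρ' := by field_simp
    rw [h3]
    calc a - ρ' ≤ ρ - ρ' := by linarith
      _ ≤ |ρ - ρ'| := le_abs_self _
  · push_neg at h1
    have hva : (ρ / a) • v - v = -((1 - ρ / a) • v) := by
      rw [sub_smul, one_smul]; abel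
    have ha0 : 0 < a := lt_of_le_of_lt hρ h1
    rw [hva, norm_neg, norm_smul, Real.norm_eq_abs,
      abs_of_nonneg (by rw [sub_nonneg]; exact (div_le_one ha0).2 h1.le), ← ha]
    have h3 : (1 - ρ / a) * a = a - ρ := by field_simp
    rw [h3]
    calc a - ρ ≤ ρ' - ρ := by linarith
      _ ≤ |ρ - ρ'| := by rw [abs_sub_comm]; exact le_abs_self _
  · push_neg at h1
    have ha0 : 0 < a := lt_of_le_of_lt hρ h1
    rw [← sub_smul, norm_smul, Real.norm_eq_abs, ← ha]
    rw [div_sub_div_same, abs_div, abs_of_pos ha0, div_mul_cancel₀ _ ha0.ne']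

lemma ballProj_pt {N : ℕ} {ρ : ℝ} (hρ : 0 ≤ ρ) (v w : EuclideanSpace ℝ (Fin N)) :
    ‖ballProj ρ v - ballProj ρ w‖ ≤ ‖v - w‖ := by
  have key : ∀ (x y : EuclideanSpace ℝ (Fin N)), ‖x‖ ≤ ρ → ρ < ‖y‖ →
      ‖x - (ρ / ‖y‖) • y‖ ≤ ‖x - y‖ := by
    intro x y hx hy
    have hb : (0:ℝ) < ‖y‖ := lt_of_le_of_lt hρ hy
    apply le_of_pow_le_pow_left₀ two_ne_zero (norm_nonneg _)
    rw [norm_sub_sq_real, norm_sub_sq_real, norm_smul, real_inner_smul_right]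
    set s := ρ / ‖y‖ with hsdef
    have hs : s * ‖y‖ = ρ := div_mul_cancel₀ _ hb.ne'
    have hs0 : 0 ≤ s := div_nonneg hρ hb.le
    have hs1 : s ≤ 1 := by rw [hsdef]; exact (div_le_one hb).2 hy.le
    have ht : ⟪x, y⟫ ≤ ρ * ‖y‖ :=
      (real_inner_le_norm x y).trans (mul_le_mul_of_nonneg_right hx hb.le)
    have hs2 : ρ * (s * ‖y‖) = ρ * ρ := by rw [hs]
    rw [Real.norm_eq_abs, abs_of_nonneg hs0]
    nlinarith [mul_le_mul_of_nonneg_right ht (sub_nonneg.2 hs1), sq_nonneg (‖y‖ - ρ), hs2, hs]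
  unfold ballProj
  by_cases h1 : ‖v‖ ≤ ρ <;> by_cases h2 : ‖w‖ ≤ ρ <;>
    simp only [h1, h2, if_true, if_false, if_pos, if_neg]
  · exact le_rfl
  · push_neg at h2; exact key v w h1 h2
  · push_neg at h1
    rw [norm_sub_rev ((ρ / ‖v‖) • v), norm_sub_rev v]
    exact key w v h2 h1
  · push_neg at h1; push_neg at h2
    have ha : (0:ℝ) < ‖v‖ := lt_of_le_of_lt hρ h1
    have hb : (0:ℝ) < ‖w‖ := lt_of_le_of_lt hρ h2
    apply le_of_pow_le_pow_left₀ two_ne_zero (norm_nonneg _)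
    rw [norm_sub_sq_real, norm_sub_sq_real, norm_smul, norm_smul,
      real_inner_smul_left, real_inner_smul_right]
    set s := ρ / ‖v‖ with hsdef
    set u := ρ / ‖w‖ with hudef
    have hs : s * ‖v‖ = ρ := div_mul_cancel₀ _ ha.ne'
    have hu : u * ‖w‖ = ρ := div_mul_cancel₀ _ hb.ne'
    have hs0 : 0 ≤ s := div_nonneg hρ ha.le
    have hu0 : 0 ≤ u := div_nonneg hρ hb.le
    have hs1 : s ≤ 1 := by rw [hsdef]; exact (div_le_one ha).2 h1.le
    have hu1 : u ≤ 1 := by rw [hudef]; exact (div_le_one hb).2 h2.le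
    have ht : ⟪v, w⟫ ≤ ‖v‖ * ‖w‖ := real_inner_le_norm v w
    have hsu1 : s * u ≤ 1 := mul_le_one₀ hs1 hu0 hu1
    have hsu : (s * ‖v‖) * (u * ‖w‖) = ρ * ρ := by rw [hs, hu]
    rw [Real.norm_eq_abs, Real.norm_eq_abs, abs_of_nonneg hs0, abs_of_nonneg hu0]
    nlinarith [mul_le_mul_of_nonneg_right ht (sub_nonneg.2 hsu1), sq_nonneg (‖v‖ - ‖w‖),
      hsu, hs, hu]

/-- projection of a fixed point `η` onto the moving closed ball
`B̄(o(z), r(z))` is `4L₀`-Lipschitz in `z` (for `o`, `r` `L₀`-Lipschitz), and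
`|η − H(z)| = d(η, B̄(o(z), r(z)))`. -/
theorem stmt5 {m N : ℕ} (L₀ : NNReal)
    (o : EuclideanSpace ℝ (Fin m) → EuclideanSpace ℝ (Fin N))
    (r : EuclideanSpace ℝ (Fin m) → ℝ)
    (ho : LipschitzWith L₀ o) (hr : LipschitzWith L₀ r) (hr0 : ∀ z, 0 ≤ r z)
    (η : EuclideanSpace ℝ (Fin N))
    (H : EuclideanSpace ℝ (Fin m) → EuclideanSpace ℝ (Fin N))
    (hH : ∀ z, H z = if ‖η - o z‖ ≤ r z then η
        else o z + (r z / ‖η - o z‖) • (η - o z)) :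
    LipschitzWith (4 * L₀) H ∧
      ∀ z, ‖η - H z‖ = Metric.infDist η (Metric.closedBall (o z) (r z)) := by
  have hH' : ∀ z, H z = o z + ballProj (r z) (η - o z) := by
    intro z
    rw [hH z]; unfold ballProj
    by_cases h : ‖η - o z‖ ≤ r z
    · rw [if_pos h, if_pos h]; abel
    · rw [if_neg h, if_neg h]
  constructor
  · apply LipschitzWith.of_dist_le_mul
    intro z₁ z₂
    have h1 : dist (o z₁) (o z₂) ≤ L₀ * dist z₁ z₂ := ho.dist_le_mul z₁ z₂
    have h2 : |r z₁ - r z₂| ≤ L₀ * dist z₁ z₂ := by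
      have := hr.dist_le_mul z₁ z₂; rwa [Real.dist_eq] at this
    have h3 : dist (ballProj (r z₁) (η - o z₁)) (ballProj (r z₁) (η - o z₂))
        ≤ dist (o z₁) (o z₂) := by
      rw [dist_eq_norm]
      calc ‖ballProj (r z₁) (η - o z₁) - ballProj (r z₁) (η - o z₂)‖
          ≤ ‖(η - o z₁) - (η - o z₂)‖ := ballProj_pt (hr0 z₁) _ _
        _ = dist (o z₁) (o z₂) := by
            rw [sub_sub_sub_cancel_left, ← dist_eq_norm, dist_comm]
    have h4 : dist (ballProj (r z₁) (η - o z₂)) (ballProj (r z₂) (η - o z₂))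
        ≤ |r z₁ - r z₂| := by
      rw [dist_eq_norm]; exact ballProj_radius (hr0 z₁) (hr0 z₂) _
    have hd : dist (H z₁) (H z₂)
        ≤ dist (o z₁) (o z₂) + (dist (o z₁) (o z₂) + |r z₁ - r z₂|) := by
      rw [hH' z₁, hH' z₂, dist_eq_norm, add_sub_add_comm]
      refine (norm_add_le _ _).trans ?_
      rw [← dist_eq_norm, ← dist_eq_norm]
      exact add_le_add le_rfl
        ((dist_triangle _ (ballProj (r z₁) (η - o z₂)) _).trans (add_le_add h3 h4))
    have : (↑(4 * L₀) : ℝ) = 4 * (L₀ : ℝ) := by push_cast; ring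
    rw [this]
    have hL : (0:ℝ) ≤ (L₀ : ℝ) * dist z₁ z₂ :=
      mul_nonneg L₀.coe_nonneg dist_nonneg
    linarith
  · intro z
    by_cases h : ‖η - o z‖ ≤ r z
    · rw [hH z, if_pos h, sub_self, norm_zero]
      symm
      exact Metric.infDist_zero_of_mem
        (Metric.mem_closedBall.2 (by rw [dist_eq_norm]; exact h))
    · push_neg at h
      have ha : (0:ℝ) < ‖η - o z‖ := lt_of_le_of_lt (hr0 z) h
      rw [hH z, if_neg (not_le.2 h)]
      have hval : η - (o z + (r z / ‖η - o z‖) • (η - o z))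
          = (1 - r z / ‖η - o z‖) • (η - o z) := by
        rw [sub_smul, one_smul]; abel
      rw [hval, norm_smul, Real.norm_eq_abs,
        abs_of_nonneg (sub_nonneg.2 ((div_le_one ha).2 h.le))]
      have heq : (1 - r z / ‖η - o z‖) * ‖η - o z‖ = ‖η - o z‖ - r z := by
        field_simp
      rw [heq]
      have hne : (Metric.closedBall (o z) (r z)).Nonempty :=
        ⟨o z, Metric.mem_closedBall_self (hr0 z)⟩
      apply le_antisymm
      · by_contra hc
        push_neg at hc
        obtain ⟨y, hy, hlt⟩ := (Metric.infDist_lt_iff hne).1 hc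
        have h5 : dist η (o z) ≤ dist η y + dist y (o z) := dist_triangle _ _ _
        have h6 : dist y (o z) ≤ r z := Metric.mem_closedBall.1 hy
        have h7 : dist η (o z) = ‖η - o z‖ := dist_eq_norm _ _
        linarith
      · have hmem : o z + (r z / ‖η - o z‖) • (η - o z)
            ∈ Metric.closedBall (o z) (r z) := by
          rw [Metric.mem_closedBall, dist_eq_norm, add_sub_cancel_left, norm_smul,
            Real.norm_eq_abs, abs_of_nonneg (div_nonneg (hr0 z) ha.le),
            div_mul_cancel₀ _ ha.ne']
        have := Metric.infDist_le_dist_of_mem (x := η) hmem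
        rw [dist_eq_norm, hval, norm_smul, Real.norm_eq_abs,
          abs_of_nonneg (sub_nonneg.2 ((div_le_one ha).2 h.le)), heq] at this
        exact this
end

section
/- Suppose a set-valued map ℍ : K → (nonempty subsets of ℝ^N) on a compact metric space K satisfies: ℍ(θ) = ⋂_{ε>0} ℍ_ε(θ) with each ℍ_ε(θ) open and bounded uniformly in θ ∈ K, cl(ℍ_{ε₁}(θ)) ⊆ ℍ_{ε₂}(θ) for ε₁ < ε₂, and the following transfer property: for every ε > 0 there is δ > 0 such that for all θ, θ' ∈ K with dist(θ,θ') < δ, ℍ_{ε/2}(θ) ⊆ ℍ_ε(θ'). If ℍ is continuous on K with respect to the Hausdorff distance, then sup_{θ∈K} d_H(ℍ_ε(θ), ℍ(θ)) → 0 as ε → 0. -/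
open Metric Filter Set Bornology

/-- on a compact `K`, if `ℍ(θ) = ⋂_{ε>0} ℍ_ε(θ)` with open,
uniformly bounded `ℍ_ε`, `cl(ℍ_{ε₁}(θ)) ⊆ ℍ_{ε₂}(θ)` for `ε₁ < ε₂`, the
transfer property holds, and `ℍ` is continuous under the Hausdorff distance,
then `sup_θ d_H(ℍ_ε(θ), ℍ(θ)) → 0` as `ε → 0⁺`. -/
theorem stmt8 {N : ℕ} {K : Type*} [MetricSpace K] [CompactSpace K]
    (ℍ : K → Set (EuclideanSpace ℝ (Fin N)))
    (ℍe : ℝ → K → Set (EuclideanSpace ℝ (Fin N)))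
    (hne : ∀ θ, (ℍ θ).Nonempty)
    (hint : ∀ θ, ℍ θ = ⋂ ε > (0:ℝ), ℍe ε θ)
    (hopen : ∀ ε : ℝ, 0 < ε → ∀ θ, IsOpen (ℍe ε θ))
    (hbdd : ∀ ε : ℝ, 0 < ε → ∃ M : ℝ, ∀ θ, ℍe ε θ ⊆ Metric.closedBall 0 M)
    (hcl : ∀ ε₁ ε₂ : ℝ, 0 < ε₁ → ε₁ < ε₂ → ∀ θ, closure (ℍe ε₁ θ) ⊆ ℍe ε₂ θ)
    (htransfer : ∀ ε : ℝ, 0 < ε → ∃ δ > (0:ℝ), ∀ θ θ' : K,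
      dist θ θ' < δ → ℍe (ε / 2) θ ⊆ ℍe ε θ')
    (hcont : ∀ θ₀ : K, Filter.Tendsto
      (fun θ => Metric.hausdorffDist (ℍ θ) (ℍ θ₀)) (nhds θ₀) (nhds 0)) :
    Filter.Tendsto (fun ε => ⨆ θ : K, Metric.hausdorffDist (ℍe ε θ) (ℍ θ))
      (nhdsWithin 0 (Set.Ioi 0)) (nhds 0) := by
  have mono : ∀ {ε₁ ε₂ : ℝ}, 0 < ε₁ → ε₁ < ε₂ → ∀ θ, ℍe ε₁ θ ⊆ ℍe ε₂ θ :=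
    fun h1 h12 θ => subset_closure.trans (hcl _ _ h1 h12 θ)
  have hsub : ∀ {ε : ℝ}, 0 < ε → ∀ θ, ℍ θ ⊆ ℍe ε θ := by
    intro ε hε θ
    rw [hint θ]
    exact iInter₂_subset ε hε
  obtain ⟨M, hM⟩ := hbdd 1 one_pos
  have hbH : ∀ θ, IsBounded (ℍ θ) := fun θ =>
    isBounded_closedBall.subset ((hsub one_pos θ).trans (hM θ))
  have hEd : ∀ θ θ', EMetric.hausdorffEdist (ℍ θ) (ℍ θ') ≠ ⊤ := fun θ θ' =>
    hausdorffEdist_ne_top_of_nonempty_of_bounded (hne θ) (hne θ') (hbH θ) (hbH θ')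
  -- pointwise claim: small ℍe set inside a thickening of ℍ θ₀
  have key : ∀ r : ℝ, 0 < r → ∀ θ₀ : K, ∃ ε₀ : ℝ, 0 < ε₀ ∧ ε₀ ≤ 1 ∧
      ℍe ε₀ θ₀ ⊆ thickening r (ℍ θ₀) := by
    intro r hr θ₀
    set C : ℕ → Set (EuclideanSpace ℝ (Fin N)) :=
      fun n => closure (ℍe (1 / (n + 1)) θ₀) with hCdef
    have hpos : ∀ n : ℕ, (0:ℝ) < 1 / (n + 1) := fun n => by positivity
    have hanti : ∀ n, C (n + 1) ⊆ C n := by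
      intro n
      apply closure_mono
      refine mono (hpos (n+1)) ?_ θ₀
      apply one_div_lt_one_div_of_lt (by positivity)
      push_cast; linarith
    have hCcl : ∀ n, IsClosed (C n) := fun n => isClosed_closure
    have hCb : ∀ n, IsCompact (C n) := by
      intro n
      obtain ⟨Mn, hMn⟩ := hbdd (1 / (n + 1)) (hpos n)
      exact (isBounded_closedBall.subset (hMn θ₀)).isCompact_closure
    have hCint : (⋂ n, C n) ⊆ ℍ θ₀ := by
      intro x hx
      rw [hint θ₀]
      simp only [mem_iInter]
      intro ε hε
      obtain ⟨n, hn⟩ := exists_nat_one_div_lt hε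
      exact hcl _ _ (hpos n) hn θ₀ (mem_iInter.1 hx n)
    by_contra hcon
    push_neg at hcon
    have hnonempty : ∀ n, (C n \ thickening r (ℍ θ₀)).Nonempty := by
      intro n
      rcases (hcon (1 / (n+1)) (hpos n) (by
        rw [div_le_one (by positivity)]; push_cast; linarith)) with h
      obtain ⟨x, hx1, hx2⟩ := Set.not_subset.1 h
      exact ⟨x, subset_closure hx1, hx2⟩
    have := IsCompact.nonempty_iInter_of_sequence_nonempty_isCompact_isClosed
      (fun n => C n \ thickening r (ℍ θ₀))
      (fun n => diff_subset_diff_left (hanti n))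
      hnonempty
      ((hCb 0).diff (isOpen_thickening))
      (fun n => (hCcl n).sdiff isOpen_thickening)
    obtain ⟨x, hx⟩ := this
    simp only [mem_iInter, mem_diff] at hx
    exact (hx 0).2 (self_subset_thickening hr _ (hCint (mem_iInter.2 fun n => (hx n).1)))
  -- main argument
  rw [Metric.tendsto_nhdsWithin_nhds]
  intro r hr
  -- for each θ₀ get local data
  have local_data : ∀ θ₀ : K, ∃ η > (0:ℝ), ∃ δ > (0:ℝ), ∀ θ : K, dist θ θ₀ < δ →
      ∀ ε : ℝ, 0 < ε → ε < η → ℍe ε θ ⊆ thickening (r / 4) (ℍ θ₀) := by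
    intro θ₀
    obtain ⟨ε₀, hε₀, hε₀1, hthick⟩ := key (r / 4) (by linarith) θ₀
    obtain ⟨δ₁, hδ₁, htr⟩ := htransfer ε₀ hε₀
    refine ⟨ε₀ / 2, by linarith, δ₁, hδ₁, fun θ hθ ε hε hεη x hx => ?_⟩
    exact hthick (htr θ θ₀ hθ (mono hε hεη θ hx))
  choose η hη δ hδ hloc using local_data
  -- continuity radii
  have cont_data : ∀ θ₀ : K, ∃ δ' > (0:ℝ), ∀ θ : K, dist θ θ₀ < δ' →
      Metric.hausdorffDist (ℍ θ₀) (ℍ θ) < r / 4 := by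
    intro θ₀
    have := (hcont θ₀).eventually (eventually_lt_nhds (show (0:ℝ) < r/4 by linarith))
    rw [Metric.eventually_nhds_iff] at this
    obtain ⟨δ', hδ', h⟩ := this
    refine ⟨δ', hδ', fun θ hθ => ?_⟩
    rw [Metric.hausdorffDist_comm]
    exact h hθ
  choose δ' hδ' hcont' using cont_data
  -- compact cover
  have hcover : (Set.univ : Set K) ⊆ ⋃ θ₀ : K, ball θ₀ (min (δ θ₀) (δ' θ₀)) := by
    intro θ _
    exact mem_iUnion.2 ⟨θ, mem_ball_self (lt_min (hδ θ) (hδ' θ))⟩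
  rcases isEmpty_or_nonempty K with hK | hK
  · refine ⟨1, one_pos, fun {ε} _ _ => ?_⟩
    rw [Real.iSup_of_isEmpty]
    simpa using hr
  obtain ⟨t, htcover⟩ := isCompact_univ.elim_finite_subcover
    (fun θ₀ : K => ball θ₀ (min (δ θ₀) (δ' θ₀))) (fun θ₀ => isOpen_ball) hcover
  have htne : t.Nonempty := by
    by_contra h
    rw [Finset.not_nonempty_iff_eq_empty] at h
    obtain ⟨θ⟩ := hK
    have := htcover (mem_univ θ)
    simp [h] at this
  set εs : ℝ := min 1 (t.inf' htne η) with hεs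
  have hεspos : 0 < εs := lt_min one_pos ((Finset.lt_inf'_iff htne).2 fun b _ => hη b)
  refine ⟨εs, hεspos, fun {ε} hεIoi hεdist => ?_⟩
  have hε : 0 < ε := hεIoi
  have hεlt : ε < εs := by
    rw [Real.dist_eq, sub_zero, abs_of_pos hε] at hεdist; exact hεdist
  -- bound each hausdorffDist by r/2
  have hbound : ∀ θ : K, Metric.hausdorffDist (ℍe ε θ) (ℍ θ) ≤ r / 2 := by
    intro θ
    have hmem := htcover (mem_univ θ)
    simp only [mem_iUnion, mem_ball, lt_min_iff, lt_inf_iff, exists_prop] at hmem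
    obtain ⟨θ₀, hθ₀t, h1, h2⟩ := hmem
    have hεη : ε < η θ₀ := lt_of_lt_of_le hεlt
      (le_trans (min_le_right _ _) (Finset.inf'_le _ hθ₀t))
    have hsubset : ℍe ε θ ⊆ thickening (r / 4) (ℍ θ₀) := hloc θ₀ θ h1 ε hε hεη
    apply Metric.hausdorffDist_le_of_infDist (by linarith)
    · intro x hx
      obtain ⟨y, hy, hxy⟩ := Metric.mem_thickening_iff.1 (hsubset hx)
      have hinf : Metric.infDist x (ℍ θ₀) ≤ r / 4 :=
        le_trans (Metric.infDist_le_dist_of_mem hy) hxy.le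
      have : Metric.infDist x (ℍ θ) ≤
          Metric.infDist x (ℍ θ₀) + Metric.hausdorffDist (ℍ θ₀) (ℍ θ) :=
        Metric.infDist_le_infDist_add_hausdorffDist (hEd θ₀ θ)
      have hc := hcont' θ₀ θ h2
      linarith
    · intro y hy
      have : y ∈ ℍe ε θ := hsub hε θ hy
      rw [Metric.infDist_zero_of_mem this]
      linarith
  have hnonneg : 0 ≤ ⨆ θ : K, Metric.hausdorffDist (ℍe ε θ) (ℍ θ) :=
    Real.iSup_nonneg fun θ => Metric.hausdorffDist_nonneg
  have hsup : (⨆ θ : K, Metric.hausdorffDist (ℍe ε θ) (ℍ θ)) ≤ r / 2 :=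
    Real.iSup_le hbound (by linarith)
  rw [Real.dist_eq, sub_zero, abs_of_nonneg hnonneg]
  linarith
end

section
/- Suppose a set-valued map ℍ on a compact set K satisfies the structure of the previous statement (ℍ(θ) = ⋂_{ε>0} ℍ_ε(θ), monotone and uniformly bounded ℍ_ε, and the transfer property: for every ε there is δ such that dist(θ,θ') < δ implies ℍ_{ε/2}(θ) ⊆ ℍ_ε(θ')). If ρ_K(ε) := sup_{θ∈K} d_H(ℍ_ε(θ), ℍ(θ)) → 0 as ε → 0, then ℍ is uniformly continuous on K under the Hausdorff distance. -/
private lemma hd_le_of_subset_ball {X : Type*} [MetricSpace X] {s t : Set X} {c : X} {M : ℝ}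
    (hs : s ⊆ Metric.closedBall c M) (ht : t ⊆ Metric.closedBall c M)
    (hsne : s.Nonempty) (htne : t.Nonempty) :
    Metric.hausdorffDist s t ≤ 2 * M := by
  obtain ⟨y, hy⟩ := htne
  obtain ⟨x, hx⟩ := hsne
  have hM : 0 ≤ M := by
    have := hs hx; simpa [Metric.mem_closedBall] using dist_nonneg.trans this
  refine Metric.hausdorffDist_le_of_infDist (by linarith) ?_ ?_
  · intro a ha
    refine (Metric.infDist_le_dist_of_mem hy).trans ?_
    have h1 := hs ha; have h2 := ht hy
    simp only [Metric.mem_closedBall] at h1 h2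
    calc dist a y ≤ dist a c + dist c y := dist_triangle _ _ _
      _ ≤ M + M := by rw [dist_comm c y]; linarith
      _ = 2 * M := by ring
  · intro a ha
    refine (Metric.infDist_le_dist_of_mem hx).trans ?_
    have h1 := ht ha; have h2 := hs hx
    simp only [Metric.mem_closedBall] at h1 h2
    calc dist a x ≤ dist a c + dist c x := dist_triangle _ _ _
      _ ≤ M + M := by rw [dist_comm c x]; linarith
      _ = 2 * M := by ring

/-- conversely, with the same structure (`ℍ = ⋂_{ε>0} ℍ_ε`,
monotone and uniformly bounded `ℍ_ε`, transfer property), if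
`ρ_K(ε) := sup_θ d_H(ℍ_ε(θ), ℍ(θ)) → 0` as `ε → 0⁺`, then `ℍ` is uniformly
continuous on the compact `K` under the Hausdorff distance. -/
theorem stmt9 {N : ℕ} {K : Type*} [MetricSpace K] [CompactSpace K]
    (ℍ : K → Set (EuclideanSpace ℝ (Fin N)))
    (ℍe : ℝ → K → Set (EuclideanSpace ℝ (Fin N)))
    (hne : ∀ θ, (ℍ θ).Nonempty)
    (hint : ∀ θ, ℍ θ = ⋂ ε > (0:ℝ), ℍe ε θ)
    (hbdd : ∀ ε : ℝ, 0 < ε → ∃ M : ℝ, ∀ θ, ℍe ε θ ⊆ Metric.closedBall 0 M)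
    (hmono : ∀ ε₁ ε₂ : ℝ, 0 < ε₁ → ε₁ < ε₂ → ∀ θ, ℍe ε₁ θ ⊆ ℍe ε₂ θ)
    (htransfer : ∀ ε : ℝ, 0 < ε → ∃ δ > (0:ℝ), ∀ θ θ' : K,
      dist θ θ' < δ → ℍe (ε / 2) θ ⊆ ℍe ε θ')
    (hρ : Filter.Tendsto (fun ε => ⨆ θ : K, Metric.hausdorffDist (ℍe ε θ) (ℍ θ))
      (nhdsWithin 0 (Set.Ioi 0)) (nhds 0)) :
    ∀ η : ℝ, 0 < η → ∃ δ > (0:ℝ), ∀ θ θ' : K,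
      dist θ θ' < δ → Metric.hausdorffDist (ℍ θ) (ℍ θ') < η := by
  intro η hη
  -- ℍ θ ⊆ ℍe a θ for a > 0
  have hsub : ∀ (a : ℝ), 0 < a → ∀ θ, ℍ θ ⊆ ℍe a θ := by
    intro a ha θ x hx
    rw [hint θ] at hx
    exact Set.mem_iInter₂.1 hx a ha
  -- pick ε > 0 with sup < η/2
  have hev : ∀ᶠ ε in nhdsWithin 0 (Set.Ioi 0),
      (⨆ θ : K, Metric.hausdorffDist (ℍe ε θ) (ℍ θ)) < η / 2 :=
    hρ.eventually (gt_mem_nhds (half_pos hη))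
  obtain ⟨ε, hsup, hε⟩ := (hev.and (eventually_mem_nhdsWithin)).exists
  rw [Set.mem_Ioi] at hε
  obtain ⟨M, hM⟩ := hbdd ε hε
  -- boundedness facts
  have hHsub : ∀ θ, ℍ θ ⊆ Metric.closedBall 0 M := fun θ =>
    (hsub ε hε θ).trans (hM θ)
  have hEne : ∀ θ, (ℍe ε θ).Nonempty := fun θ => (hne θ).mono (hsub ε hε θ)
  have hEdist : ∀ θ, EMetric.hausdorffEdist (ℍe ε θ) (ℍ θ) ≠ ⊤ := fun θ =>
    Metric.hausdorffEdist_ne_top_of_nonempty_of_bounded (hEne θ) (hne θ)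
      (Metric.isBounded_closedBall.subset (hM θ))
      (Metric.isBounded_closedBall.subset (hHsub θ))
  -- each hausdorffDist ≤ sup
  have hbdda : BddAbove (Set.range fun θ : K => Metric.hausdorffDist (ℍe ε θ) (ℍ θ)) := by
    refine ⟨2 * M, ?_⟩
    rintro _ ⟨θ, rfl⟩
    exact hd_le_of_subset_ball (hM θ) (hHsub θ) (hEne θ) (hne θ)
  have hle : ∀ θ : K, Metric.hausdorffDist (ℍe ε θ) (ℍ θ) < η / 2 := by
    intro θ
    exact lt_of_le_of_lt (le_ciSup hbdda θ) hsup
  obtain ⟨δ, hδ, hδtr⟩ := htransfer ε hε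
  refine ⟨δ, hδ, fun θ θ' hd => ?_⟩
  have hd' : dist θ' θ < δ := by rwa [dist_comm] at hd
  have hθθ' : ℍ θ ⊆ ℍe ε θ' := fun x hx =>
    hδtr θ θ' hd (hsub (ε / 2) (half_pos hε) θ hx)
  have hθ'θ : ℍ θ' ⊆ ℍe ε θ := fun x hx =>
    hδtr θ' θ hd' (hsub (ε / 2) (half_pos hε) θ' hx)
  have key : Metric.hausdorffDist (ℍ θ) (ℍ θ') ≤ η / 2 := by
    refine Metric.hausdorffDist_le_of_infDist (by linarith) ?_ ?_
    · intro x hx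
      exact (Metric.infDist_le_hausdorffDist_of_mem (hθθ' hx) (hEdist θ')).trans (hle θ').le
    · intro x hx
      exact (Metric.infDist_le_hausdorffDist_of_mem (hθ'θ hx) (hEdist θ)).trans (hle θ).le
  linarith
end

section
/- Let Δη be a nonnegative predictable process and M a positive random variable with E[M^{−1}] ≤ C₀, and suppose E[ M ∫_0^T Δη_t dt ] ≤ ε. Let φ be a nonnegative predictable process with E[∫_0^T φ_t² dt] ≤ C₁. Then E[ ∫_0^T φ_t^{3/2} · 1_{{Δη_t > √ε}} dt ] ≤ C ε^{1/16}, where C depends only on C₀, C₁, T. -/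
/-!
On the event `{Δη > √ε}` one has `1 ≤ ε^{-1/16} Δη^{1/8}`, and
`Δη^{1/8} φ^{3/2} = (M⁻¹)^{1/8} (φ²)^{3/4} (M Δη)^{1/8}`. Hölder's inequality on `(0, T] × Ω` with
exponents `(8, 4/3, 8)` then bounds the integral by `ε^{-1/16} (T C₀)^{1/8} C₁^{3/4} ε^{1/8}`.
-/

open MeasureTheory Set
open scoped ENNReal

section

variable {α : Type*} [MeasurableSpace α] {μ : Measure α}

theorem ENNReal.lintegral_mul_rpow_three_le {f g h : α → ℝ≥0∞} (hf : AEMeasurable f μ)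
    (hg : AEMeasurable g μ) (hh : AEMeasurable h μ) {p q r : ℝ} (hp : 0 ≤ p) (hq : 0 ≤ q)
    (hr : 0 ≤ r) (hpqr : p + q + r = 1) :
    ∫⁻ a, f a ^ p * g a ^ q * h a ^ r ∂μ ≤
      (∫⁻ a, f a ∂μ) ^ p * (∫⁻ a, g a ∂μ) ^ q * (∫⁻ a, h a ∂μ) ^ r := by
  have := ENNReal.lintegral_prod_norm_pow_le (μ := μ) Finset.univ (f := ![f, g, h])
    (p := ![p, q, r]) (by simp [Fin.forall_fin_succ, hf, hg, hh])
    (by simpa [Fin.sum_univ_three] using hpqr) (by simp [Fin.forall_fin_succ, hp, hq, hr])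
  simpa [Fin.prod_univ_three] using this

theorem lintegral_ofReal_mul_rpow_three_le {f g h : α → ℝ} (hf : Measurable f)
    (hg : Measurable g) (hh : Measurable h) (hf0 : ∀ a, 0 ≤ f a) (hg0 : ∀ a, 0 ≤ g a)
    (hh0 : ∀ a, 0 ≤ h a) {p q r : ℝ} (hp : 0 ≤ p) (hq : 0 ≤ q) (hr : 0 ≤ r)
    (hpqr : p + q + r = 1) {A B E : ℝ} (hA : 0 ≤ A) (hB : 0 ≤ B) (hE : 0 ≤ E)
    (hfA : ∫⁻ a, ENNReal.ofReal (f a) ∂μ ≤ ENNReal.ofReal A)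
    (hgB : ∫⁻ a, ENNReal.ofReal (g a) ∂μ ≤ ENNReal.ofReal B)
    (hhE : ∫⁻ a, ENNReal.ofReal (h a) ∂μ ≤ ENNReal.ofReal E) :
    ∫⁻ a, ENNReal.ofReal (f a ^ p * g a ^ q * h a ^ r) ∂μ ≤
      ENNReal.ofReal (A ^ p * B ^ q * E ^ r) := by
  have hofReal : ∀ {x y z : ℝ}, 0 ≤ x → 0 ≤ y → 0 ≤ z → ENNReal.ofReal (x ^ p * y ^ q * z ^ r) =
      ENNReal.ofReal x ^ p * ENNReal.ofReal y ^ q * ENNReal.ofReal z ^ r := by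
    intro x y z hx hy hz
    rw [ENNReal.ofReal_mul (by positivity), ENNReal.ofReal_mul (by positivity),
      ENNReal.ofReal_rpow_of_nonneg hx hp, ENNReal.ofReal_rpow_of_nonneg hy hq,
      ENNReal.ofReal_rpow_of_nonneg hz hr]
  simp_rw [hofReal (hf0 _) (hg0 _) (hh0 _), hofReal hA hB hE]
  exact (ENNReal.lintegral_mul_rpow_three_le hf.ennreal_ofReal.aemeasurable
    hg.ennreal_ofReal.aemeasurable hh.ennreal_ofReal.aemeasurable hp hq hr hpqr).trans
    (by gcongr)

theorem ite_sqrt_lt_rpow_le {δ m d x : ℝ} (hδ : 0 < δ) (hm : 0 < m) (hd : 0 ≤ d) (hx : 0 ≤ x) :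
    (if √δ < d then x ^ (3 / 2 : ℝ) else 0) ≤ δ ^ (-1 / 16 : ℝ) *
      ((m⁻¹) ^ (1 / 8 : ℝ) * (x ^ 2) ^ (3 / 4 : ℝ) * (m * d) ^ (1 / 8 : ℝ)) := by
  have hrhs : (m⁻¹) ^ (1 / 8 : ℝ) * (x ^ 2) ^ (3 / 4 : ℝ) * (m * d) ^ (1 / 8 : ℝ) =
      d ^ (1 / 8 : ℝ) * x ^ (3 / 2 : ℝ) := by
    rw [mul_right_comm, ← Real.mul_rpow (by positivity) (by positivity),
      inv_mul_cancel_left₀ hm.ne', ← Real.rpow_natCast, ← Real.rpow_mul hx]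
    norm_num
  rw [hrhs]
  split_ifs with hδd
  · have hroot : δ ^ (1 / 16 : ℝ) ≤ d ^ (1 / 8 : ℝ) := by
      calc δ ^ (1 / 16 : ℝ) = √δ ^ (1 / 8 : ℝ) := by
            rw [Real.sqrt_eq_rpow, ← Real.rpow_mul hδ.le]; norm_num
        _ ≤ d ^ (1 / 8 : ℝ) := by gcongr
    have hone : 1 ≤ δ ^ (-1 / 16 : ℝ) * d ^ (1 / 8 : ℝ) := by
      calc (1 : ℝ) = δ ^ (-1 / 16 : ℝ) * δ ^ (1 / 16 : ℝ) := by
            rw [← Real.rpow_add hδ]; norm_num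
        _ ≤ _ := by gcongr
    calc x ^ (3 / 2 : ℝ) = 1 * x ^ (3 / 2 : ℝ) := (one_mul _).symm
      _ ≤ _ := by rw [← mul_assoc]; gcongr
  · positivity

theorem lintegral_ofReal_ite_sqrt_lt_le {m d x : α → ℝ} (hm : Measurable m) (hd : Measurable d)
    (hx : Measurable x) (hm0 : ∀ a, 0 < m a) (hd0 : ∀ a, 0 ≤ d a) (hx0 : ∀ a, 0 ≤ x a)
    {δ A B E : ℝ} (hδ : 0 < δ) (hA : 0 ≤ A) (hB : 0 ≤ B) (hE : 0 ≤ E)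
    (hmA : ∫⁻ a, ENNReal.ofReal (m a)⁻¹ ∂μ ≤ ENNReal.ofReal A)
    (hxB : ∫⁻ a, ENNReal.ofReal (x a ^ 2) ∂μ ≤ ENNReal.ofReal B)
    (hdE : ∫⁻ a, ENNReal.ofReal (m a * d a) ∂μ ≤ ENNReal.ofReal E) :
    ∫⁻ a, ENNReal.ofReal (if √δ < d a then x a ^ (3 / 2 : ℝ) else 0) ∂μ ≤
      ENNReal.ofReal
        (δ ^ (-1 / 16 : ℝ) * (A ^ (1 / 8 : ℝ) * B ^ (3 / 4 : ℝ) * E ^ (1 / 8 : ℝ))) := by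
  calc _ ≤ ∫⁻ a, ENNReal.ofReal (δ ^ (-1 / 16 : ℝ)) * ENNReal.ofReal ((m a)⁻¹ ^ (1 / 8 : ℝ) *
          (x a ^ 2) ^ (3 / 4 : ℝ) * (m a * d a) ^ (1 / 8 : ℝ)) ∂μ := by
        refine lintegral_mono fun a => ?_
        rw [← ENNReal.ofReal_mul (by positivity)]
        exact ENNReal.ofReal_le_ofReal
          (ite_sqrt_lt_rpow_le hδ (hm0 a) (hd0 a) (hx0 a))
    _ = ENNReal.ofReal (δ ^ (-1 / 16 : ℝ)) * ∫⁻ a, ENNReal.ofReal ((m a)⁻¹ ^ (1 / 8 : ℝ) *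
          (x a ^ 2) ^ (3 / 4 : ℝ) * (m a * d a) ^ (1 / 8 : ℝ)) ∂μ :=
        lintegral_const_mul' _ _ ENNReal.ofReal_ne_top
    _ ≤ _ := by
        rw [ENNReal.ofReal_mul (by positivity)]
        gcongr
        exact lintegral_ofReal_mul_rpow_three_le hm.inv (hx.pow_const 2) (hm.mul hd)
          (fun a => (inv_pos.2 (hm0 a)).le) (fun a => sq_nonneg _)
          (fun a => mul_nonneg (hm0 a).le (hd0 a)) (by norm_num) (by norm_num) (by norm_num)
          (by norm_num) hA hB hE hmA hxB hdE

end

section TimeProduct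

variable {Ω : Type*} [MeasurableSpace Ω] {μ : Measure Ω} [SFinite μ] {T : ℝ}

theorem lintegral_prod_ofReal_le_of_integral_intervalIntegral_le (hT : 0 ≤ T) {f : ℝ → Ω → ℝ}
    (hf : Measurable fun q : ℝ × Ω => f q.1 q.2) (hf0 : ∀ t ω, 0 ≤ f t ω)
    (hsec : ∀ ω, IntervalIntegrable (fun t => f t ω) volume 0 T)
    (hint : Integrable (fun ω => ∫ t in (0 : ℝ)..T, f t ω) μ) {c : ℝ}
    (hc : ∫ ω, (∫ t in (0 : ℝ)..T, f t ω) ∂μ ≤ c) :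
    ∫⁻ q, ENNReal.ofReal (f q.1 q.2) ∂(volume.restrict (Ioc 0 T)).prod μ ≤ ENNReal.ofReal c := by
  have hinner : ∀ ω, ∫⁻ t in Ioc 0 T, ENNReal.ofReal (f t ω) =
      ENNReal.ofReal (∫ t in (0 : ℝ)..T, f t ω) := fun ω => by
    rw [intervalIntegral.integral_of_le hT, ofReal_integral_eq_lintegral_ofReal
      ((intervalIntegrable_iff_integrableOn_Ioc_of_le hT).1 (hsec ω))
      (ae_of_all _ fun t => hf0 t ω)]
  rw [lintegral_prod_symm' _ hf.ennreal_ofReal]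
  simp_rw [hinner]
  rw [← ofReal_integral_eq_lintegral_ofReal hint
    (ae_of_all _ fun ω => intervalIntegral.integral_nonneg hT fun t _ => hf0 t ω)]
  exact ENNReal.ofReal_le_ofReal hc

theorem integral_intervalIntegral_le_of_lintegral_prod_le (hT : 0 ≤ T) {f : ℝ → Ω → ℝ}
    (hf : Measurable fun q : ℝ × Ω => f q.1 q.2) (hf0 : ∀ t ω, 0 ≤ f t ω) {c : ℝ} (hc0 : 0 ≤ c)
    (hc : ∫⁻ q, ENNReal.ofReal (f q.1 q.2) ∂(volume.restrict (Ioc 0 T)).prod μ ≤ ENNReal.ofReal c) :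
    ∫ ω, (∫ t in (0 : ℝ)..T, f t ω) ∂μ ≤ c := by
  have hinner : ∀ ω, ENNReal.ofReal (∫ t in (0 : ℝ)..T, f t ω) ≤
      ∫⁻ t in Ioc 0 T, ENNReal.ofReal (f t ω) := fun ω => by
    rw [intervalIntegral.integral_of_le hT, integral_eq_lintegral_of_nonneg_ae
      (ae_of_all _ fun t => hf0 t ω)
      (hf.comp (measurable_id.prodMk measurable_const)).aestronglyMeasurable]
    exact ENNReal.ofReal_toReal_le
  have hmeas : AEStronglyMeasurable (fun ω => ∫ t in (0 : ℝ)..T, f t ω) μ := by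
    simp_rw [intervalIntegral.integral_of_le hT]
    exact hf.stronglyMeasurable.integral_prod_left'.aestronglyMeasurable
  rw [integral_eq_lintegral_of_nonneg_ae
    (ae_of_all _ fun ω => intervalIntegral.integral_nonneg hT fun t _ => hf0 t ω) hmeas]
  refine ENNReal.toReal_le_of_le_ofReal hc0 ((lintegral_mono hinner).trans ?_)
  rwa [lintegral_prod_symm' _ hf.ennreal_ofReal] at hc

end TimeProduct

/-- if `Δη ≥ 0`, `E[M⁻¹] ≤ C₀`, `E[M ∫_0^T Δη dt] ≤ ε`, `φ ≥ 0`
with `E[∫_0^T φ² dt] ≤ C₁`, then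
`E[∫_0^T φ^{3/2} 1_{Δη > √ε} dt] ≤ C ε^{1/16}` with `C = C(C₀, C₁, T)`. -/
theorem stmt12 (C₀ C₁ T : ℝ) (hC₀ : 0 ≤ C₀) (hC₁ : 0 ≤ C₁) (hT : 0 < T) :
    ∃ C : ℝ, 0 ≤ C ∧
      ∀ (Ω : Type) (_ : MeasurableSpace Ω) (μ : Measure Ω)
        (_ : IsProbabilityMeasure μ)
        (Δη φ : ℝ → Ω → ℝ) (M : Ω → ℝ) (ε : ℝ), 0 < ε →
        Measurable (fun q : ℝ × Ω => Δη q.1 q.2) →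
        Measurable (fun q : ℝ × Ω => φ q.1 q.2) →
        Measurable M → (∀ ω, 0 < M ω) →
        (∀ t ω, 0 ≤ Δη t ω) → (∀ t ω, 0 ≤ φ t ω) →
        Integrable (fun ω => (M ω)⁻¹) μ →
        (∫ ω, (M ω)⁻¹ ∂μ) ≤ C₀ →
        (∀ ω, IntervalIntegrable (fun t => Δη t ω) volume 0 T) →
        Integrable (fun ω => M ω * ∫ t in (0:ℝ)..T, Δη t ω) μ →
        (∫ ω, (M ω * ∫ t in (0:ℝ)..T, Δη t ω) ∂μ) ≤ ε →
        (∀ ω, IntervalIntegrable (fun t => φ t ω ^ (2:ℕ)) volume 0 T) →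
        Integrable (fun ω => ∫ t in (0:ℝ)..T, φ t ω ^ (2:ℕ)) μ →
        (∫ ω, (∫ t in (0:ℝ)..T, φ t ω ^ (2:ℕ)) ∂μ) ≤ C₁ →
        (∫ ω, (∫ t in (0:ℝ)..T,
            (if Real.sqrt ε < Δη t ω then φ t ω ^ ((3:ℝ)/2) else 0)) ∂μ)
          ≤ C * ε ^ ((1:ℝ)/16) := by
  refine ⟨(T * C₀) ^ (1 / 8 : ℝ) * C₁ ^ (3 / 4 : ℝ), by positivity, ?_⟩
  intro Ω _ μ _ Δη φ M ε hε hΔη hφ hM hM0 hΔη0 hφ0 hMinv hMinvC₀ hΔηT hMΔη hMΔηε hφT hφ2 hφ2C₁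
  have hM' : Measurable fun q : ℝ × Ω => M q.2 := hM.comp measurable_snd
  have hMinvT : ∫⁻ q, ENNReal.ofReal (M q.2)⁻¹ ∂(volume.restrict (Ioc 0 T)).prod μ ≤
      ENNReal.ofReal (T * C₀) := by
    refine lintegral_prod_ofReal_le_of_integral_intervalIntegral_le hT.le (f := fun _ ω => (M ω)⁻¹)
      hM'.inv (fun _ ω => (inv_pos.2 (hM0 ω)).le) (fun _ => intervalIntegrable_const) ?_ ?_
    · simpa using hMinv.const_mul T
    · simpa [integral_const_mul] using mul_le_mul_of_nonneg_left hMinvC₀ hT.le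
  have hφ2T := lintegral_prod_ofReal_le_of_integral_intervalIntegral_le hT.le
    (hφ.pow_const 2) (fun t ω => sq_nonneg (φ t ω)) hφT hφ2 hφ2C₁
  have hMΔηT := lintegral_prod_ofReal_le_of_integral_intervalIntegral_le hT.le
    (f := fun t ω => M ω * Δη t ω) (hM'.mul hΔη) (fun t ω => mul_nonneg (hM0 ω).le (hΔη0 t ω))
    (fun ω => (hΔηT ω).const_mul (M ω)) (by simpa using hMΔη) (by simpa using hMΔηε)
  refine integral_intervalIntegral_le_of_lintegral_prod_le hT.le ?_ ?_ (by positivity) ?_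
  · exact Measurable.ite (measurableSet_lt measurable_const hΔη) (hφ.pow_const _) measurable_const
  · intro t ω
    split_ifs
    exacts [Real.rpow_nonneg (hφ0 t ω) _, le_rfl]
  · convert lintegral_ofReal_ite_sqrt_lt_le hM' hΔη hφ (fun q => hM0 q.2) (fun q => hΔη0 q.1 q.2)
      (fun q => hφ0 q.1 q.2) hε (by positivity) hC₁ hε.le hMinvT hφ2T hMΔηT using 2
    have hεexp : ε ^ (1 / 16 : ℝ) = ε ^ (-1 / 16 : ℝ) * ε ^ (1 / 8 : ℝ) := by
      rw [← Real.rpow_add hε]; norm_num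
    rw [hεexp]
    ring
end

section
/- (Two-person zero-sum case.) Let A₁, A₂ be nonempty sets and h₁ : A₁ × A₂ → ℝ a bounded function; set h₂ := −h₁. Suppose the Isaacs condition holds: inf_{a₂} sup_{a₁} h₁(a₁,a₂) = sup_{a₁} inf_{a₂} h₁(a₁,a₂) =: v. Then the set value of the static game, ℍ := ⋂_{ε>0} { y ∈ ℝ² : |y − (h₁(a), h₂(a))| < ε for some ε-Nash equilibrium a }, equals the singleton {(v, −v)}. -/
/-- two-person zero-sum case: under the Isaacs condition
`inf_{a₂} sup_{a₁} h₁ = sup_{a₁} inf_{a₂} h₁ = v`, the set value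
`ℍ = ⋂_{ε>0} { y ∈ ℝ² : |y − (h₁(a), −h₁(a))| < ε for some ε-Nash eq. a }`
equals the singleton `{(v, −v)}`. -/
theorem stmt14 {A₁ A₂ : Type*} [Nonempty A₁] [Nonempty A₂]
    (h₁ : A₁ → A₂ → ℝ) (Mb : ℝ) (hb : ∀ a₁ a₂, |h₁ a₁ a₂| ≤ Mb)
    (v : ℝ)
    (hIsaacs₁ : (⨅ a₂, ⨆ a₁, h₁ a₁ a₂) = v)
    (hIsaacs₂ : (⨆ a₁, ⨅ a₂, h₁ a₁ a₂) = v) :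
    (⋂ ε > (0:ℝ), {y : ℝ × ℝ | ∃ a : A₁ × A₂,
        (∀ b₁ : A₁, h₁ b₁ a.2 - ε ≤ h₁ a.1 a.2) ∧
        (∀ b₂ : A₂, h₁ a.1 a.2 ≤ h₁ a.1 b₂ + ε) ∧
        dist y (h₁ a.1 a.2, -h₁ a.1 a.2) < ε})
      = {(v, -v)} := by
  have bddA : ∀ a₂, BddAbove (Set.range fun a₁ => h₁ a₁ a₂) := fun a₂ =>
    ⟨Mb, by rintro x ⟨a₁, rfl⟩; exact (abs_le.1 (hb a₁ a₂)).2⟩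
  have bddB : ∀ a₁, BddBelow (Set.range fun a₂ => h₁ a₁ a₂) := fun a₁ =>
    ⟨-Mb, by rintro x ⟨a₂, rfl⟩; exact (abs_le.1 (hb a₁ a₂)).1⟩
  set f : A₂ → ℝ := fun a₂ => ⨆ a₁, h₁ a₁ a₂ with hf
  set g : A₁ → ℝ := fun a₁ => ⨅ a₂, h₁ a₁ a₂ with hg
  have hfh : ∀ a₁ a₂, h₁ a₁ a₂ ≤ f a₂ := fun a₁ a₂ => le_ciSup (bddA a₂) a₁
  have hgh : ∀ a₁ a₂, g a₁ ≤ h₁ a₁ a₂ := fun a₁ a₂ => ciInf_le (bddB a₁) a₂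
  have bddf : BddBelow (Set.range f) := by
    refine ⟨-Mb, ?_⟩
    rintro x ⟨a₂, rfl⟩
    exact le_trans (abs_le.1 (hb (Classical.arbitrary A₁) a₂)).1
      (hfh (Classical.arbitrary A₁) a₂)
  have bddg : BddAbove (Set.range g) := by
    refine ⟨Mb, ?_⟩
    rintro x ⟨a₁, rfl⟩
    exact le_trans (hgh a₁ (Classical.arbitrary A₂))
      (abs_le.1 (hb a₁ (Classical.arbitrary A₂))).2
  have hvf : ∀ a₂, v ≤ f a₂ := fun a₂ => hIsaacs₁ ▸ ciInf_le bddf a₂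
  have hgv : ∀ a₁, g a₁ ≤ v := fun a₁ => hIsaacs₂ ▸ le_ciSup bddg a₁
  ext y
  simp only [Set.mem_iInter, Set.mem_setOf_eq, Set.mem_singleton_iff]
  constructor
  · intro hy
    have key : ∀ ε : ℝ, 0 < ε → dist y (v, -v) < 2 * ε := by
      intro ε hε
      obtain ⟨a, hN1, hN2, hdist⟩ := hy ε hε
      set h := h₁ a.1 a.2 with hh
      have hfa : f a.2 ≤ h + ε := ciSup_le (fun b₁ => by linarith [hN1 b₁])
      have hga : h - ε ≤ g a.1 := le_ciInf (fun b₂ => by linarith [hN2 b₂])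
      have h1 : v ≤ h + ε := le_trans (hvf a.2) hfa
      have h2 : h - ε ≤ v := le_trans hga (hgv a.1)
      have hd2 : dist (h, -h) ((v : ℝ), -v) ≤ ε := by
        rw [Prod.dist_eq]
        simp only [Real.dist_eq]
        apply max_le <;> rw [abs_le] <;> constructor <;> linarith
      calc dist y (v, -v) ≤ dist y (h, -h) + dist (h, -h) (v, -v) := dist_triangle _ _ _
        _ < ε + ε := by linarith
        _ = 2 * ε := by ring
    by_contra hne
    have hd : 0 < dist y (v, -v) := dist_pos.2 hne
    have := key (dist y (v, -v) / 4) (by linarith)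
    linarith
  · rintro rfl ε hε
    set δ := ε / 4 with hδ
    have hδ0 : 0 < δ := by positivity
    obtain ⟨a₂, ha₂⟩ : ∃ a₂, f a₂ < v + δ := by
      apply exists_lt_of_ciInf_lt
      rw [hIsaacs₁]; linarith
    obtain ⟨a₁, ha₁⟩ : ∃ a₁, v - δ < g a₁ := by
      apply exists_lt_of_lt_ciSup
      rw [hIsaacs₂]; linarith
    refine ⟨(a₁, a₂), ?_, ?_, ?_⟩
    · intro b₁
      have := hfh b₁ a₂
      have := hgh a₁ a₂
      simp only
      linarith
    · intro b₂
      have := hfh a₁ a₂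
      have := hgh a₁ b₂
      simp only
      linarith
    · have hlo := hgh a₁ a₂
      have hhi := hfh a₁ a₂
      rw [Prod.dist_eq]
      simp only [Real.dist_eq]
      apply max_lt <;> rw [abs_lt] <;> constructor <;> linarith
end
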